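/- (Inexact duality.) Let x ∈ ℂⁿ be an s-sparse vector with T = supp(x), let A ∈ ℂ^{m×n} and let X ∈ ℂ^{n×n} be any invertible matrix. Assume that (i) ‖(P_T X A*A P_T)⁻¹‖_∞ ≤ 2 (the inverse taken on the range of P_T), (ii) max_{i ∈ T^c} ‖P_T X A*A e_i‖₂ ≤ 1, and that there exists a vector v in the row space of A satisfying (iii) ‖v_T − sgn(x)‖₂ ≤ 1/4 and (iv) ‖v_{T^c}‖_∞ ≤ 1/4. Then the solution x* of the convex program min ‖x̄‖₁ subject to A x̄ = A x is unique and equal to x. -/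

import Mathlib

/-! Let `h ≠ 0` lie in the kernel of `A`. Since `P_T X A*A h = 0`, the left inverse `B` gives
`h_T = -B P_T X A*A h_{Tᶜ}`, so `‖h_T‖₂ ≤ 2 ‖h_{Tᶜ}‖₁` by (i) and (ii); in particular `h_{Tᶜ} ≠ 0`.
The certificate `v` lies in the row space of `A`, hence is orthogonal to `h`, so
`⟨sgn x, h⟩ = ⟨sgn x - v_T, h_T⟩ - ⟨v_{Tᶜ}, h_{Tᶜ}⟩` has modulus at most `(1/4 · 2 + 1/4) ‖h_{Tᶜ}‖₁`
by (iii) and (iv). Together with `‖x + h‖₁ ≥ ‖x‖₁ + Re ⟨sgn x, h⟩ + ‖h_{Tᶜ}‖₁` this gives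
`‖x + h‖₁ ≥ ‖x‖₁ + ‖h_{Tᶜ}‖₁ / 4 > ‖x‖₁`. -/

open MeasureTheory Matrix Finset ComplexConjugate
open scoped BigOperators Matrix ComplexOrder

noncomputable section

/-- The ℓ₂ (Euclidean) norm of a vector in ℂⁿ. -/
def l2norm {n : ℕ} (v : Fin n → ℂ) : ℝ := Real.sqrt (∑ i, ‖v i‖ ^ 2)

/-- The ℓ₁ norm of a vector in ℂⁿ. -/
def l1norm {n : ℕ} (v : Fin n → ℂ) : ℝ := ∑ i, ‖v i‖

/-- The ℓ∞ norm (maximal absolute entry) of a vector in ℂⁿ. -/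
def linfNorm {n : ℕ} (v : Fin n → ℂ) : ℝ := ⨆ i, ‖v i‖

/-- The sparsity ‖v‖₀ of a vector: the cardinality of its support. -/
def sparsity {n : ℕ} (v : Fin n → ℂ) : ℕ := (Finset.univ.filter fun i => v i ≠ 0).card

/-- Largest s-sparse eigenvalue λ_max(s, M) = sup over s-sparse v ≠ 0 of ‖Mv‖₂/‖v‖₂. -/
def sparseMax {n : ℕ} (s : ℕ) (M : Matrix (Fin n) (Fin n) ℂ) : ℝ :=
  ⨆ v : {v : Fin n → ℂ // v ≠ 0 ∧ sparsity v ≤ s}, l2norm (M.mulVec v.1) / l2norm v.1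

/-- Smallest s-sparse eigenvalue λ_min(s, M). -/
def sparseMin {n : ℕ} (s : ℕ) (M : Matrix (Fin n) (Fin n) ℂ) : ℝ :=
  ⨅ v : {v : Fin n → ℂ // v ≠ 0 ∧ sparsity v ≤ s}, l2norm (M.mulVec v.1) / l2norm v.1

/-- s-sparse condition number cond(s, M) = λ_max(s,M)/λ_min(s,M). -/
def sparseCond {n : ℕ} (s : ℕ) (M : Matrix (Fin n) (Fin n) ℂ) : ℝ :=
  sparseMax s M / sparseMin s M

/-- Operator norm (largest singular value) of a square matrix. -/
def opNorm {n : ℕ} (M : Matrix (Fin n) (Fin n) ℂ) : ℝ :=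
  ⨆ v : {v : Fin n → ℂ // v ≠ 0}, l2norm (M.mulVec v.1) / l2norm v.1

/-- The rank-one matrix a a*. -/
def outer {n : ℕ} (a : Fin n → ℂ) : Matrix (Fin n) (Fin n) ℂ :=
  Matrix.of fun i j => a i * conj (a j)

/-- The covariance matrix E[a a*] of the distribution F. -/
def covMatrix {n : ℕ} (F : Measure (Fin n → ℂ)) : Matrix (Fin n) (Fin n) ℂ :=
  Matrix.of fun i j => ∫ a, a i * conj (a j) ∂F

/-- The sampling matrix A = (1/√m) Σᵢ eᵢ aᵢ*. -/
def samplingMatrix {m n : ℕ} (a : Fin m → Fin n → ℂ) : Matrix (Fin m) (Fin n) ℂ :=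
  Matrix.of fun k j => ((Real.sqrt m : ℂ))⁻¹ * conj (a k j)

/-- Orthogonal projector onto vectors supported on T. -/
def projT {n : ℕ} (T : Finset (Fin n)) : Matrix (Fin n) (Fin n) ℂ :=
  Matrix.of fun i j => if i = j ∧ i ∈ T then 1 else 0

/-- The sign vector sgn(x): xᵢ/|xᵢ| on supp(x) and 0 elsewhere. -/
def sgnVec {n : ℕ} (x : Fin n → ℂ) : Fin n → ℂ :=
  fun i => if x i = 0 then 0 else x i / (‖x i‖ : ℂ)

/-- t is an almost sure bound for both incoherence quantities
    max_i |⟨a,eᵢ⟩|² and max_i |⟨a, E[aa*]⁻¹ eᵢ⟩|². -/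
def IncohBound {n : ℕ} (F : Measure (Fin n → ℂ)) (t : ℝ) : Prop :=
  ∀ᵐ a ∂F, ∀ i, ‖a i‖ ^ 2 ≤ t ∧ ‖∑ j, conj (a j) * (covMatrix F)⁻¹ j i‖ ^ 2 ≤ t

/-- μ is the incoherence parameter: the smallest almost sure incoherence bound. -/
def IsIncoherenceParam {n : ℕ} (F : Measure (Fin n → ℂ)) (μ : ℝ) : Prop :=
  IsLeast {t | IncohBound F t} μ

/-- x is the unique minimizer of the ℓ₁ norm among solutions of A x̄ = A x. -/
def UniqueL1Min {m n : ℕ} (A : Matrix (Fin m) (Fin n) ℂ) (x : Fin n → ℂ) : Prop :=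
  ∀ y : Fin n → ℂ, A.mulVec y = A.mulVec x → y ≠ x → l1norm x < l1norm y

section Norms

variable {n : ℕ}

theorem l2norm_eq_norm_toLp (v : Fin n → ℂ) : l2norm v = ‖WithLp.toLp 2 v‖ := by
  rw [EuclideanSpace.norm_eq]; rfl

theorem l2norm_nonneg (v : Fin n → ℂ) : 0 ≤ l2norm v :=
  Real.sqrt_nonneg _

theorem l2norm_eq_zero_iff {v : Fin n → ℂ} : l2norm v = 0 ↔ v = 0 := by
  rw [l2norm_eq_norm_toLp, norm_eq_zero, WithLp.toLp_eq_zero]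

theorem l2norm_neg (v : Fin n → ℂ) : l2norm (-v) = l2norm v := by
  simp only [l2norm_eq_norm_toLp, WithLp.toLp_neg, norm_neg]

theorem l2norm_sub_comm (u v : Fin n → ℂ) : l2norm (u - v) = l2norm (v - u) := by
  rw [← neg_sub, l2norm_neg]

theorem l2norm_sum_smul_le {ι : Type*} (s : Finset ι) (c : ι → ℂ) (f : ι → Fin n → ℂ) :
    l2norm (∑ i ∈ s, c i • f i) ≤ ∑ i ∈ s, ‖c i‖ * l2norm (f i) := by
  simp only [l2norm_eq_norm_toLp, WithLp.toLp_sum, WithLp.toLp_smul, ← norm_smul]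
  exact norm_sum_le _ _

theorem norm_star_dotProduct_le_l2norm_mul (u w : Fin n → ℂ) :
    ‖star u ⬝ᵥ w‖ ≤ l2norm u * l2norm w := by
  rw [dotProduct_comm, ← EuclideanSpace.inner_toLp_toLp, l2norm_eq_norm_toLp,
    l2norm_eq_norm_toLp]
  exact norm_inner_le_norm _ _

theorem l1norm_nonneg (v : Fin n → ℂ) : 0 ≤ l1norm v :=
  Finset.sum_nonneg fun i _ => norm_nonneg (v i)

theorem l1norm_eq_zero_iff {v : Fin n → ℂ} : l1norm v = 0 ↔ v = 0 := by
  rw [l1norm, Finset.sum_eq_zero_iff_of_nonneg fun i _ => norm_nonneg (v i), funext_iff]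
  simp

theorem norm_le_linfNorm (v : Fin n → ℂ) (i : Fin n) : ‖v i‖ ≤ linfNorm v :=
  le_ciSup (f := fun j => ‖v j‖) (Set.finite_range _).bddAbove i

theorem norm_star_dotProduct_le_linfNorm_mul (u w : Fin n → ℂ) :
    ‖star u ⬝ᵥ w‖ ≤ linfNorm u * l1norm w := by
  rw [l1norm, Finset.mul_sum]
  refine (norm_sum_le _ _).trans (Finset.sum_le_sum fun i _ => ?_)
  rw [Pi.star_apply, norm_mul, norm_star]
  exact mul_le_mul_of_nonneg_right (norm_le_linfNorm u i) (norm_nonneg _)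

theorem opNorm_nonneg (M : Matrix (Fin n) (Fin n) ℂ) : 0 ≤ opNorm M :=
  Real.iSup_nonneg fun _ => div_nonneg (l2norm_nonneg _) (l2norm_nonneg _)

theorem l2norm_mulVec_le_of_opNorm_le {M : Matrix (Fin n) (Fin n) ℂ} {c : ℝ}
    (hM : opNorm M ≤ c) (v : Fin n → ℂ) : l2norm (M *ᵥ v) ≤ c * l2norm v := by
  rcases eq_or_ne v 0 with rfl | hv
  · simp [l2norm_eq_norm_toLp]
  have hpos : 0 < l2norm v := (l2norm_nonneg v).lt_of_ne' (l2norm_eq_zero_iff.not.mpr hv)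
  have hbdd : BddAbove (Set.range fun u : {u : Fin n → ℂ // u ≠ 0} =>
      l2norm (M *ᵥ u.1) / l2norm u.1) := by
    refine ⟨‖Matrix.toEuclideanCLM (𝕜 := ℂ) M‖, ?_⟩
    rintro _ ⟨⟨u, -⟩, rfl⟩
    refine div_le_of_le_mul₀ (l2norm_nonneg _) (norm_nonneg _) ?_
    simpa only [l2norm_eq_norm_toLp, Matrix.toEuclideanCLM_toLp]
      using (Matrix.toEuclideanCLM (𝕜 := ℂ) M).le_opNorm (WithLp.toLp 2 u)
  have hratio := (le_ciSup hbdd ⟨v, hv⟩).trans hM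
  rwa [div_le_iff₀ hpos] at hratio

end Norms

section Projections

variable {n : ℕ}

theorem projT_mulVec_apply (T : Finset (Fin n)) (v : Fin n → ℂ) (i : Fin n) :
    (projT T *ᵥ v) i = if i ∈ T then v i else 0 := by
  simp only [projT, mulVec, dotProduct, of_apply, ite_mul, one_mul, zero_mul]
  split_ifs with hi <;> simp [hi]

theorem projT_mulVec_add_projT_compl_mulVec (T : Finset (Fin n)) (v : Fin n → ℂ) :
    projT T *ᵥ v + projT Tᶜ *ᵥ v = v := by
  ext i
  by_cases hi : i ∈ T <;> simp [projT_mulVec_apply, hi]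

theorem mulVec_eq_sum_smul_mulVec_single {m : ℕ} (M : Matrix (Fin m) (Fin n) ℂ)
    (v : Fin n → ℂ) : M *ᵥ v = ∑ i, v i • M *ᵥ Pi.single i 1 := by
  ext k
  simp [mulVec, dotProduct, Finset.sum_apply, mul_comm]

end Projections

theorem star_conjTranspose_mulVec_dotProduct_eq_zero {ι κ R : Type*} [Fintype ι] [Fintype κ]
    [NonUnitalSemiring R] [StarRing R] {A : Matrix κ ι R} {h : ι → R} (hAh : A *ᵥ h = 0)
    (w : κ → R) : star (Aᴴ *ᵥ w) ⬝ᵥ h = 0 := by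
  rw [star_mulVec, conjTranspose_conjTranspose, ← dotProduct_mulVec, hAh, dotProduct_zero]

section Recovery

variable {n : ℕ}

theorem l2norm_mulVec_le_mul_l1norm {m : ℕ} (M : Matrix (Fin m) (Fin n) ℂ) {d : ℝ}
    {u : Fin n → ℂ} (hM : ∀ i, u i ≠ 0 → l2norm (M *ᵥ Pi.single i 1) ≤ d) :
    l2norm (M *ᵥ u) ≤ d * l1norm u := by
  rw [mulVec_eq_sum_smul_mulVec_single, l1norm, Finset.mul_sum]
  refine (l2norm_sum_smul_le _ _ _).trans (Finset.sum_le_sum fun i _ => ?_)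
  rcases eq_or_ne (u i) 0 with hi | hi
  · simp [hi]
  · rw [mul_comm d]
    exact mul_le_mul_of_nonneg_left (hM i hi) (norm_nonneg _)

theorem l2norm_projT_mulVec_le {T : Finset (Fin n)} {B M : Matrix (Fin n) (Fin n) ℂ} {c d : ℝ}
    (hBM : B * (M * projT T) = projT T) (hB : opNorm B ≤ c)
    (hM : ∀ i ∉ T, l2norm (M *ᵥ Pi.single i 1) ≤ d) {h : Fin n → ℂ} (hMh : M *ᵥ h = 0) :
    l2norm (projT T *ᵥ h) ≤ c * d * l1norm (projT Tᶜ *ᵥ h) := by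
  have hc : 0 ≤ c := (opNorm_nonneg B).trans hB
  have hMT : M *ᵥ (projT T *ᵥ h) = -(M *ᵥ (projT Tᶜ *ᵥ h)) := by
    rw [eq_neg_iff_add_eq_zero, ← mulVec_add, projT_mulVec_add_projT_compl_mulVec, hMh]
  have hTh : projT T *ᵥ h = B *ᵥ -(M *ᵥ (projT Tᶜ *ᵥ h)) := by
    rw [← hMT, mulVec_mulVec, mulVec_mulVec, Matrix.mul_assoc, hBM]
  have hoff : ∀ i, (projT Tᶜ *ᵥ h) i ≠ 0 → l2norm (M *ᵥ Pi.single i 1) ≤ d := by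
    intro i hi
    refine hM i fun hiT => hi ?_
    simp [projT_mulVec_apply, hiT]
  calc l2norm (projT T *ᵥ h) ≤ c * l2norm (-(M *ᵥ (projT Tᶜ *ᵥ h))) := by
        rw [hTh]; exact l2norm_mulVec_le_of_opNorm_le hB _
    _ ≤ c * d * l1norm (projT Tᶜ *ᵥ h) := by
        rw [l2norm_neg, mul_assoc]
        exact mul_le_mul_of_nonneg_left (l2norm_mulVec_le_mul_l1norm M hoff) hc

theorem l1norm_projT_compl_mulVec_pos {T : Finset (Fin n)} {h : Fin n → ℂ} {γ : ℝ}
    (hh : l2norm (projT T *ᵥ h) ≤ γ * l1norm (projT Tᶜ *ᵥ h)) (h0 : h ≠ 0) :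
    0 < l1norm (projT Tᶜ *ᵥ h) := by
  refine (l1norm_nonneg _).lt_of_ne' fun hS => h0 ?_
  rw [hS, mul_zero] at hh
  have hTh : projT T *ᵥ h = 0 := l2norm_eq_zero_iff.mp (hh.antisymm (l2norm_nonneg _))
  rw [← projT_mulVec_add_projT_compl_mulVec T h, hTh, l1norm_eq_zero_iff.mp hS, add_zero]

theorem star_dotProduct_eq_of_forall_notMem_eq_zero {T : Finset (Fin n)} {s : Fin n → ℂ}
    (hs : ∀ i ∉ T, s i = 0) (v h : Fin n → ℂ) :
    star s ⬝ᵥ h = star (s - projT T *ᵥ v) ⬝ᵥ (projT T *ᵥ h)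
      - star (projT Tᶜ *ᵥ v) ⬝ᵥ (projT Tᶜ *ᵥ h) + star v ⬝ᵥ h := by
  simp only [dotProduct, ← Finset.sum_sub_distrib, ← Finset.sum_add_distrib]
  refine Finset.sum_congr rfl fun i _ => ?_
  by_cases hi : i ∈ T
  · simp [projT_mulVec_apply, hi]
    ring
  · simp [projT_mulVec_apply, hi, hs]

theorem norm_add_re_star_div_norm_mul_le {a : ℂ} (ha : a ≠ 0) (b : ℂ) :
    ‖a‖ + (star (a / ‖a‖) * b).re ≤ ‖a + b‖ := by
  have hunit : ‖star (a / ‖a‖)‖ = 1 := by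
    rw [norm_star, norm_div, Complex.norm_real, norm_norm, div_self (norm_ne_zero_iff.mpr ha)]
  have hrot : star (a / ‖a‖) * (a + b) = ‖a‖ + star (a / ‖a‖) * b := by
    rw [mul_add, star_div₀, Complex.star_def, Complex.conj_ofReal, div_mul_eq_mul_div,
      Complex.conj_mul', sq, mul_div_assoc, div_self (by simpa using ha), mul_one]
  calc ‖a‖ + (star (a / ‖a‖) * b).re = (star (a / ‖a‖) * (a + b)).re := by
        rw [hrot, Complex.add_re, Complex.ofReal_re]
    _ ≤ ‖star (a / ‖a‖) * (a + b)‖ := Complex.re_le_norm _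
    _ = ‖a + b‖ := by rw [norm_mul, hunit, one_mul]

theorem l1norm_add_re_star_sgnVec_dotProduct_le {x : Fin n → ℂ} {T : Finset (Fin n)}
    (hT : T = Finset.univ.filter fun i => x i ≠ 0) (h : Fin n → ℂ) :
    l1norm x + (star (sgnVec x) ⬝ᵥ h).re + l1norm (projT Tᶜ *ᵥ h) ≤ l1norm (x + h) := by
  simp only [l1norm, dotProduct, Complex.re_sum, ← Finset.sum_add_distrib]
  refine Finset.sum_le_sum fun i _ => ?_
  by_cases hx : x i = 0
  · simp [sgnVec, projT_mulVec_apply, hT, hx]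
  · simpa [sgnVec, projT_mulVec_apply, hT, hx] using norm_add_re_star_div_norm_mul_le hx (h i)

theorem l1norm_add_ge_of_inexact_dual_certificate {x v h : Fin n → ℂ} {T : Finset (Fin n)}
    (hT : T = Finset.univ.filter fun i => x i ≠ 0) {α β γ : ℝ} (hvh : star v ⬝ᵥ h = 0)
    (hv1 : l2norm (projT T *ᵥ v - sgnVec x) ≤ α) (hv2 : linfNorm (projT Tᶜ *ᵥ v) ≤ β)
    (hh : l2norm (projT T *ᵥ h) ≤ γ * l1norm (projT Tᶜ *ᵥ h)) :
    l1norm x + (1 - β - α * γ) * l1norm (projT Tᶜ *ᵥ h) ≤ l1norm (x + h) := by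
  set S := l1norm (projT Tᶜ *ᵥ h)
  have hα : 0 ≤ α := (l2norm_nonneg _).trans hv1
  have hsgn : ∀ i ∉ T, sgnVec x i = 0 := fun i hi => by
    simp_all [sgnVec]
  have hon : ‖star (sgnVec x - projT T *ᵥ v) ⬝ᵥ (projT T *ᵥ h)‖ ≤ α * (γ * S) := by
    refine (norm_star_dotProduct_le_l2norm_mul _ _).trans
      (mul_le_mul ?_ hh (l2norm_nonneg _) hα)
    rwa [l2norm_sub_comm]
  have hoff : ‖star (projT Tᶜ *ᵥ v) ⬝ᵥ (projT Tᶜ *ᵥ h)‖ ≤ β * S :=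
    (norm_star_dotProduct_le_linfNorm_mul _ _).trans
      (mul_le_mul_of_nonneg_right hv2 (l1norm_nonneg _))
  have hpair : -(α * (γ * S)) - β * S ≤ (star (sgnVec x) ⬝ᵥ h).re := by
    rw [star_dotProduct_eq_of_forall_notMem_eq_zero hsgn v h, hvh, add_zero, Complex.sub_re]
    have := Complex.abs_re_le_norm (star (sgnVec x - projT T *ᵥ v) ⬝ᵥ (projT T *ᵥ h))
    have := Complex.re_le_norm (star (projT Tᶜ *ᵥ v) ⬝ᵥ (projT Tᶜ *ᵥ h))
    linarith [neg_abs_le (star (sgnVec x - projT T *ᵥ v) ⬝ᵥ (projT T *ᵥ h)).re]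
  linarith [l1norm_add_re_star_sgnVec_dotProduct_le hT h]

end Recovery

theorem statement11_general {n m : ℕ} (x : Fin n → ℂ)
    (T : Finset (Fin n)) (hT : T = Finset.univ.filter fun i => x i ≠ 0)
    (A : Matrix (Fin m) (Fin n) ℂ)
    (X : Matrix (Fin n) (Fin n) ℂ)
    -- (i) ‖(P_T X A*A P_T)⁻¹‖_∞ ≤ 2, the inverse B taken on the range of P_T
    (B : Matrix (Fin n) (Fin n) ℂ)
    (hB1 : B * (projT T * X * Aᴴ * A * projT T) = projT T)
    (hBnorm : opNorm B ≤ 2)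
    -- (ii) max_{i ∈ T^c} ‖P_T X A*A eᵢ‖₂ ≤ 1
    (hoff : ∀ i ∉ T, l2norm ((projT T * (X * Aᴴ * A)).mulVec (Pi.single i 1)) ≤ 1)
    -- (iii), (iv): v = A* w is in the row space of A and is an inexact dual certificate
    (v : Fin n → ℂ) (w : Fin m → ℂ) (hv : v = Aᴴ.mulVec w)
    (hv1 : l2norm ((projT T).mulVec v - sgnVec x) ≤ 1 / 4)
    (hv2 : linfNorm ((projT Tᶜ).mulVec v) ≤ 1 / 4) :
    UniqueL1Min A x := by
  intro y hAy hne
  set h := y - x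
  have hAh : A *ᵥ h = 0 := by rw [mulVec_sub, hAy, sub_self]
  have hMh : (projT T * (X * Aᴴ * A)) *ᵥ h = 0 := by
    rw [← Matrix.mul_assoc, ← mulVec_mulVec, hAh, mulVec_zero]
  have hBM : B * (projT T * (X * Aᴴ * A) * projT T) = projT T := by
    simpa only [Matrix.mul_assoc] using hB1
  have hloc := l2norm_projT_mulVec_le hBM hBnorm hoff hMh
  have hvh : star v ⬝ᵥ h = 0 := hv ▸ star_conjTranspose_mulVec_dotProduct_eq_zero hAh w
  have hgain := l1norm_add_ge_of_inexact_dual_certificate hT hvh hv1 hv2 hloc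
  have hpos := l1norm_projT_compl_mulVec_pos hloc (sub_ne_zero.mpr hne)
  rw [add_sub_cancel] at hgain
  linarith

/-- Inexact duality: the existence of an inexact dual certificate together with the
local isometry and off-support conditions implies exact and unique ℓ₁ recovery. -/
theorem statement11 {n m s : ℕ} (x : Fin n → ℂ) (hx : sparsity x ≤ s)
    (T : Finset (Fin n)) (hT : T = Finset.univ.filter fun i => x i ≠ 0)
    (A : Matrix (Fin m) (Fin n) ℂ)
    (X : Matrix (Fin n) (Fin n) ℂ) (hX : IsUnit X)
    -- (i) ‖(P_T X A*A P_T)⁻¹‖_∞ ≤ 2, the inverse B taken on the range of P_T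
    (B : Matrix (Fin n) (Fin n) ℂ)
    (hB1 : B * (projT T * X * Aᴴ * A * projT T) = projT T)
    (hB2 : (projT T * X * Aᴴ * A * projT T) * B = projT T)
    (hB3 : projT T * B * projT T = B)
    (hBnorm : opNorm B ≤ 2)
    -- (ii) max_{i ∈ T^c} ‖P_T X A*A eᵢ‖₂ ≤ 1
    (hoff : ∀ i ∉ T, l2norm ((projT T * (X * Aᴴ * A)).mulVec (Pi.single i 1)) ≤ 1)
    -- (iii), (iv): v = A* w is in the row space of A and is an inexact dual certificate
    (v : Fin n → ℂ) (w : Fin m → ℂ) (hv : v = Aᴴ.mulVec w)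
    (hv1 : l2norm ((projT T).mulVec v - sgnVec x) ≤ 1 / 4)
    (hv2 : linfNorm ((projT Tᶜ).mulVec v) ≤ 1 / 4) :
    UniqueL1Min A x :=
  statement11_general x T hT A X B hB1 hBnorm hoff v w hv hv1 hv2
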